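/- arXiv:math/0001160 — 5 statements merged into one kernel-verified Lean document; each statement's English description precedes it below -/
import Mathlib

section
/- The theta function of a coset of A₆ in its dual lattice depends only on the norm of the coset modulo 2: if r, s ∈ A₆* satisfy r² − s² ∈ 2ℤ, then for every complex number w with |w| < 1, ∑_{x ∈ r+A₆} w^{7x²} = ∑_{x ∈ s+A₆} w^{7x²} (both series converge absolutely, and 7x² ∈ ℤ for x in a coset of A₆ in A₆*). -/
/-!
A vector of `A₆*` has the form `c - (∑ c / 7) 𝟙` with `c ∈ ℤ⁷`, so its norm is `-(∑ c)² / 7`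
modulo `ℤ`. Hence `r² - s² ∈ ℤ` forces `(∑ d)² ≡ (∑ c)² (mod 7)`, and since `7` is prime,
`s ≡ ±r (mod A₆)`. The isometry `x ↦ ±x` then carries `r + A₆` onto `s + A₆`, so the two theta
series are rearrangements of each other. Both converge absolutely because `7 (r + v)²` bounds the
`ℓ¹`-norm of `v` up to an additive constant.
-/

def A6 : Type := {v : Fin 7 → ℤ // ∑ i, v i = 0}

open Finset

lemma summable_pow_sum_natAbs {q : ℝ} (h0 : 0 ≤ q) (h1 : q < 1) (n : ℕ) :
    Summable fun v : Fin n → ℤ => q ^ ∑ i, (v i).natAbs := by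
  induction n with
  | zero => exact .of_finite
  | succ n ih =>
    have hpow : Summable fun m : ℤ => q ^ m.natAbs := by
      apply Summable.of_nat_of_neg <;> simpa using summable_geometric_of_lt_one h0 h1
    have hprod := hpow.mul_of_nonneg ih (fun _ => pow_nonneg h0 _) (fun _ => pow_nonneg h0 _)
    refine ((Fin.consEquiv fun _ => ℤ).symm.summable_iff.mpr hprod).congr fun v => ?_
    simp [Fin.consEquiv, Fin.sum_univ_succ, pow_add, Fin.tail]

lemma summable_pow_of_sum_natAbs_le {𝕜 ι : Type*} [NormedDivisionRing 𝕜] [CompleteSpace 𝕜]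
    {w : 𝕜} (hw : ‖w‖ < 1) {n : ℕ} {f : ι → Fin n → ℤ} (hf : Function.Injective f)
    {N : ι → ℕ} (C : ℕ) (hN : ∀ x, ∑ i, (f x i).natAbs ≤ N x + C) :
    Summable fun x => w ^ N x := by
  obtain ⟨q, hwq, hq1⟩ := exists_between hw
  have hq0 : 0 < q := (norm_nonneg w).trans_lt hwq
  refine .of_norm_bounded
    (((summable_pow_sum_natAbs hq0.le hq1 n).comp_injective hf).mul_left (q ^ C)⁻¹) fun x => ?_
  rw [norm_pow, Function.comp_apply, inv_mul_eq_div, le_div_iff₀ (by positivity)]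
  calc ‖w‖ ^ N x * q ^ C ≤ q ^ N x * q ^ C := by gcongr
    _ = q ^ (N x + C) := (pow_add q _ _).symm
    _ ≤ q ^ ∑ i, (f x i).natAbs := pow_le_pow_of_le_one hq0.le hq1.le (hN x)

lemma abs_le_sq_add_abs_add_one {K : Type*} [Field K] [LinearOrder K] [IsStrictOrderedRing K]
    (a b : K) : |b| ≤ (a + b) ^ 2 + (|a| + 1) := by
  have hshift : |b| ≤ |a + b| + |a| := by simpa using abs_sub (a + b) a
  have hsq : |a + b| ≤ (a + b) ^ 2 + 1 := by
    nlinarith [sq_abs (a + b), sq_nonneg (|a + b| - 1)]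
  linarith

lemma sum_natAbs_le_sum_sq_add {n : ℕ} (r : Fin n → ℚ) (v : Fin n → ℤ) :
    ∑ i, (v i).natAbs ≤ ∑ i, (r i + v i) ^ 2 + ∑ i, (|r i| + 1) := by
  push_cast [Nat.cast_natAbs]
  rw [← sum_add_distrib]
  exact sum_le_sum fun i _ => abs_le_sq_add_abs_add_one _ _

lemma sum_sq_sub_mean {K : Type*} [Field K] {n : ℕ} (hn : (n : K) ≠ 0) (c : Fin n → K) :
    ∑ i, (c i - (∑ j, c j) / n) ^ 2 = ∑ i, c i ^ 2 - (∑ i, c i) ^ 2 / n := by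
  simp only [sub_sq, sum_add_distrib, sum_sub_distrib, ← sum_mul, ← mul_sum, sum_const,
    card_univ, Fintype.card_fin, nsmul_eq_mul]
  field_simp
  ring

lemma Int.exists_unit_dvd_sub_of_prime_dvd_sq_sub {p a b : ℤ} (hp : Prime p)
    (h : p ∣ a ^ 2 - b ^ 2) : ∃ ε : ℤˣ, p ∣ a - ε * b := by
  rw [sq_sub_sq, hp.dvd_mul] at h
  rcases h with h | h
  · exact ⟨-1, by simpa using h⟩
  · exact ⟨1, by simpa using h⟩

namespace A6

lemma summable_theta (r : Fin 7 → ℚ) {w : ℂ} (hw : ‖w‖ < 1) (N : A6 → ℕ)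
    (hN : ∀ v : A6, (N v : ℚ) = 7 * ∑ i, (r i + (v.1 i : ℚ)) ^ 2) :
    Summable fun v : A6 => w ^ N v := by
  refine summable_pow_of_sum_natAbs_le hw Subtype.val_injective ⌈∑ i, (|r i| + 1)⌉₊ fun v => ?_
  have hsq : 0 ≤ ∑ i, (r i + (v.1 i : ℚ)) ^ 2 := by positivity
  have : ((∑ i, (v.1 i).natAbs : ℕ) : ℚ) ≤ N v + ⌈∑ i, (|r i| + 1)⌉₊ := by
    rw [hN v]
    linarith [sum_natAbs_le_sum_sq_add r v.1, Nat.le_ceil (∑ i, (|r i| + 1))]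
  exact_mod_cast this

def singleSub (i j : Fin 7) : A6 :=
  ⟨Pi.single i 1 - Pi.single j 1, by simp [sum_sub_distrib]⟩

lemma exists_int_sub_mean_of_dual {r : Fin 7 → ℚ} (hspan : ∑ i, r i = 0)
    (hdual : ∀ v : A6, ∃ k : ℤ, ∑ i, r i * (v.1 i : ℚ) = k) :
    ∃ c : Fin 7 → ℤ, r = fun i => (c i : ℚ) - (∑ j, c j : ℚ) / 7 := by
  have hdiff (i : Fin 7) : ∃ k : ℤ, r i - r 0 = k := by
    obtain ⟨k, hk⟩ := hdual (singleSub i 0)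
    refine ⟨k, hk ▸ ?_⟩
    simp [singleSub, mul_sub, sum_sub_distrib, Pi.single_apply]
  choose c hc using hdiff
  have hsum : (∑ j, c j : ℚ) = -7 * r 0 := by
    push_cast [← hc, sum_sub_distrib, hspan]
    simp
  refine ⟨c, funext fun i => ?_⟩
  rw [hsum, ← hc]
  ring

lemma exists_units_mul_add_of_dual {r s : Fin 7 → ℚ}
    (hrspan : ∑ i, r i = 0) (hsspan : ∑ i, s i = 0)
    (hrdual : ∀ v : A6, ∃ k : ℤ, ∑ i, r i * (v.1 i : ℚ) = k)
    (hsdual : ∀ v : A6, ∃ k : ℤ, ∑ i, s i * (v.1 i : ℚ) = k)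
    (hint : ∃ k : ℤ, ∑ i, r i ^ 2 - ∑ i, s i ^ 2 = k) :
    ∃ (ε : ℤˣ) (u : A6), ∀ i, s i = (ε : ℤ) * r i + u.1 i := by
  obtain ⟨c, rfl⟩ := exists_int_sub_mean_of_dual hrspan hrdual
  obtain ⟨d, rfl⟩ := exists_int_sub_mean_of_dual hsspan hsdual
  obtain ⟨k, hk⟩ := hint
  have h7 : ((7 : ℕ) : ℚ) ≠ 0 := by norm_num
  have hnorm (e : Fin 7 → ℤ) :
      ∑ i, ((e i : ℚ) - (∑ j, e j : ℚ) / 7) ^ 2 = ∑ i, (e i : ℚ) ^ 2 - (∑ i, e i : ℚ) ^ 2 / 7 := by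
    exact_mod_cast sum_sq_sub_mean h7 fun i => (e i : ℚ)
  have hdvd : (7 : ℤ) ∣ (∑ i, d i) ^ 2 - (∑ i, c i) ^ 2 := by
    refine ⟨k - ∑ i, c i ^ 2 + ∑ i, d i ^ 2, ?_⟩
    rw [hnorm, hnorm] at hk
    have : (((∑ i, d i) ^ 2 - (∑ i, c i) ^ 2 : ℤ) : ℚ) =
        7 * (k - ∑ i, c i ^ 2 + ∑ i, d i ^ 2 : ℤ) := by
      push_cast
      linear_combination 7 * hk
    exact_mod_cast this
  obtain ⟨ε, t, ht⟩ := Int.exists_unit_dvd_sub_of_prime_dvd_sq_sub (by norm_num) hdvd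
  refine ⟨ε, ⟨fun i => d i - ε * c i - t, ?_⟩, fun i => ?_⟩
  · simp only [sum_sub_distrib, ← mul_sum, sum_const, card_univ, Fintype.card_fin, nsmul_eq_mul]
    linear_combination ht
  · have ht' : (∑ j, d j : ℚ) - (ε : ℤ) * (∑ j, c j : ℚ) = 7 * t := by exact_mod_cast ht
    push_cast
    linear_combination -ht' / 7

def affineEquiv (ε : ℤˣ) (u : A6) : A6 ≃ A6 where
  toFun v := ⟨fun i => ε * v.1 i - u.1 i, by simp [sum_sub_distrib, ← mul_sum, v.2, u.2]⟩
  invFun v := ⟨fun i => ε * (v.1 i + u.1 i), by simp [sum_add_distrib, ← mul_sum, v.2, u.2]⟩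
  left_inv v := Subtype.ext <| funext fun i => by simp [← mul_assoc]
  right_inv v := Subtype.ext <| funext fun i => by simp [← mul_assoc]

lemma affineEquiv_apply_coe (ε : ℤˣ) (u v : A6) (i : Fin 7) :
    (affineEquiv ε u v).1 i = ε * v.1 i - u.1 i :=
  rfl

lemma sum_sq_affineEquiv {r s : Fin 7 → ℚ} {ε : ℤˣ} {u : A6}
    (hs : ∀ i, s i = (ε : ℤ) * r i + u.1 i) (v : A6) :
    ∑ i, (s i + ((affineEquiv ε u v).1 i : ℚ)) ^ 2 = ∑ i, (r i + (v.1 i : ℚ)) ^ 2 := by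
  have hε : ((ε : ℤ) : ℚ) ^ 2 = 1 := by rcases Int.units_eq_one_or ε with rfl | rfl <;> norm_num
  refine sum_congr rfl fun i _ => ?_
  push_cast [affineEquiv_apply_coe, hs]
  linear_combination (r i + v.1 i) ^ 2 * hε

end A6

/-- the theta function of a coset of `A₆` in its dual lattice depends
only on the norm of the coset modulo 2.  Here `r, s` are elements of the dual
lattice `A₆*` (they lie in the `ℚ`-span of `A₆` and pair integrally with the
lattice) with `r² − s² ∈ 2ℤ`, and `Nr v`, `Ns v` are the integers `7·(r+v)²`,
`7·(s+v)²` for `v ∈ A₆`.  Then for `|w| < 1` both theta series converge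
absolutely and `∑_{x ∈ r+A₆} w^{7x²} = ∑_{x ∈ s+A₆} w^{7x²}`. -/
theorem theta_A6_coset_norm_mod_two (r s : Fin 7 → ℚ)
    (hrspan : ∑ i, r i = 0) (hsspan : ∑ i, s i = 0)
    (hrdual : ∀ v : A6, ∃ k : ℤ, ∑ i, r i * (v.1 i : ℚ) = k)
    (hsdual : ∀ v : A6, ∃ k : ℤ, ∑ i, s i * (v.1 i : ℚ) = k)
    (hmod : ∃ k : ℤ, (∑ i, r i ^ 2) - (∑ i, s i ^ 2) = 2 * k)
    (Nr : A6 → ℕ) (hNr : ∀ v : A6, (Nr v : ℚ) = 7 * ∑ i, (r i + (v.1 i : ℚ)) ^ 2)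
    (Ns : A6 → ℕ) (hNs : ∀ v : A6, (Ns v : ℚ) = 7 * ∑ i, (s i + (v.1 i : ℚ)) ^ 2)
    (w : ℂ) (hw : ‖w‖ < 1) :
    Summable (fun v : A6 => w ^ Nr v) ∧
    Summable (fun v : A6 => w ^ Ns v) ∧
    (∑' v : A6, w ^ Nr v) = (∑' v : A6, w ^ Ns v) := by
  refine ⟨A6.summable_theta r hw Nr hNr, A6.summable_theta s hw Ns hNs, ?_⟩
  obtain ⟨k, hk⟩ := hmod
  obtain ⟨ε, u, hs⟩ :=
    A6.exists_units_mul_add_of_dual hrspan hsspan hrdual hsdual ⟨2 * k, by push_cast; exact hk⟩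
  have hN (v : A6) : Ns (A6.affineEquiv ε u v) = Nr v := by
    have : (Ns (A6.affineEquiv ε u v) : ℚ) = Nr v := by
      rw [hNs, hNr, A6.sum_sq_affineEquiv hs]
    exact_mod_cast this
  calc ∑' v, w ^ Nr v = ∑' v, w ^ Ns (A6.affineEquiv ε u v) := by simp only [hN]
    _ = ∑' v, w ^ Ns v := (A6.affineEquiv ε u).tsum_eq fun v => w ^ Ns v
end

section
/- The fixed-point sublattice E₈^σ = {x ∈ E₈ : σ(x) = x} is the set of all vectors m₁e₀ + m₂e₄ + m₃(e₁+e₂+e₃) + m₄(e₅+e₆+e₇) with (m₁,m₂,m₃,m₄) ∈ K, and the linear map φ(m₁,m₂,m₃,m₄) = m₁e₀ + m₂e₄ + m₃(e₁+e₂+e₃) + m₄(e₅+e₆+e₇) is an isometry from K onto E₈^σ (i.e., φ is an injective additive map with image E₈^σ satisfying (φ(u),φ(v))_{ℝ⁸} = (u,v)_K for all u,v ∈ K). -/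
/-- The `E₈` lattice inside `ℝ⁸`: all coordinates in `ℤ` or all in `ℤ + 1/2`,
with even coordinate sum. -/
def E8 : Set (Fin 8 → ℝ) :=
  {x | ((∀ i, ∃ k : ℤ, x i = k) ∨ (∀ i, ∃ k : ℤ, x i = k + 1 / 2)) ∧
    ∃ k : ℤ, ∑ i, x i = 2 * k}

/-- The order-3 isometry `σ` of `ℝ⁸`: `e₀↦e₀, e₁↦e₃, e₂↦e₁, e₃↦e₂, e₄↦e₄,
e₅↦e₇, e₆↦e₅, e₇↦e₆`, written in coordinates. -/
def sigma3 (x : Fin 8 → ℝ) : Fin 8 → ℝ := x ∘ ![0, 2, 3, 1, 4, 6, 7, 5]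

/-- The rank-4 lattice `K ⊆ ℚ⁴`: all coordinates in `ℤ` or all in `ℤ + 1/2`,
with even coordinate sum. -/
def Klat : Set (Fin 4 → ℚ) :=
  {m | ((∀ i, ∃ k : ℤ, m i = k) ∨ (∀ i, ∃ k : ℤ, m i = k + 1 / 2)) ∧
    ∃ k : ℤ, ∑ i, m i = 2 * k}

/-- The bilinear form on `K`, whose quadratic form is `m₁² + m₂² + 3m₃² + 3m₄²`. -/
def bK (u v : Fin 4 → ℚ) : ℚ := u 0 * v 0 + u 1 * v 1 + 3 * (u 2 * v 2) + 3 * (u 3 * v 3)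

/-- The map `φ(m₁,m₂,m₃,m₄) = m₁e₀ + m₂e₄ + m₃(e₁+e₂+e₃) + m₄(e₅+e₆+e₇)`. -/
def phiK (m : Fin 4 → ℚ) : Fin 8 → ℝ :=
  ![(m 0 : ℝ), (m 2 : ℝ), (m 2 : ℝ), (m 2 : ℝ), (m 1 : ℝ), (m 3 : ℝ), (m 3 : ℝ), (m 3 : ℝ)]

section VecEval
variable {α : Type*} (a0 a1 a2 a3 a4 a5 a6 a7 : α)

@[simp] lemma vec8_0 : ![a0,a1,a2,a3,a4,a5,a6,a7] (0 : Fin 8) = a0 := rfl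
@[simp] lemma vec8_1 : ![a0,a1,a2,a3,a4,a5,a6,a7] (1 : Fin 8) = a1 := rfl
@[simp] lemma vec8_2 : ![a0,a1,a2,a3,a4,a5,a6,a7] (2 : Fin 8) = a2 := rfl
@[simp] lemma vec8_3 : ![a0,a1,a2,a3,a4,a5,a6,a7] (3 : Fin 8) = a3 := rfl
@[simp] lemma vec8_4 : ![a0,a1,a2,a3,a4,a5,a6,a7] (4 : Fin 8) = a4 := rfl
@[simp] lemma vec8_5 : ![a0,a1,a2,a3,a4,a5,a6,a7] (5 : Fin 8) = a5 := rfl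
@[simp] lemma vec8_6 : ![a0,a1,a2,a3,a4,a5,a6,a7] (6 : Fin 8) = a6 := rfl
@[simp] lemma vec8_7 : ![a0,a1,a2,a3,a4,a5,a6,a7] (7 : Fin 8) = a7 := rfl
@[simp] lemma vec4_0 : ![a0,a1,a2,a3] (0 : Fin 4) = a0 := rfl
@[simp] lemma vec4_1 : ![a0,a1,a2,a3] (1 : Fin 4) = a1 := rfl
@[simp] lemma vec4_2 : ![a0,a1,a2,a3] (2 : Fin 4) = a2 := rfl
@[simp] lemma vec4_3 : ![a0,a1,a2,a3] (3 : Fin 4) = a3 := rfl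

end VecEval


/-- the fixed-point sublattice `E₈^σ` is exactly the image of `K`
under `φ`, and `φ` is an isometry from `K` onto `E₈^σ`: an injective additive
map with image `E₈^σ` satisfying `(φu, φv)_{ℝ⁸} = (u,v)_K` for all `u, v ∈ K`. -/
theorem E8_sigma_fixed_lattice :
    {x | x ∈ E8 ∧ sigma3 x = x} = phiK '' Klat ∧
    (∀ u v : Fin 4 → ℚ, phiK (u + v) = phiK u + phiK v) ∧
    Function.Injective phiK ∧
    (∀ u ∈ Klat, ∀ v ∈ Klat, ∑ i, phiK u i * phiK v i = ((bK u v : ℚ) : ℝ)) := by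
  refine ⟨?_, ?_, ?_, ?_⟩
  · ext x
    simp only [Set.mem_setOf_eq, Set.mem_image]
    constructor
    · rintro ⟨⟨hint, k, hk⟩, hσ⟩
      have e21 : x 2 = x 1 := congrFun hσ 1
      have e32 : x 3 = x 2 := congrFun hσ 2
      have e65 : x 6 = x 5 := congrFun hσ 5
      have e76 : x 7 = x 6 := congrFun hσ 6
      rw [Fin.sum_univ_eight] at hk
      rcases hint with h | h
      · choose c hc using h
        have c21 : c 2 = c 1 := by
          have := e21; rw [hc 2, hc 1] at this; exact_mod_cast this
        have c32 : c 3 = c 2 := by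
          have := e32; rw [hc 3, hc 2] at this; exact_mod_cast this
        have c65 : c 6 = c 5 := by
          have := e65; rw [hc 6, hc 5] at this; exact_mod_cast this
        have c76 : c 7 = c 6 := by
          have := e76; rw [hc 7, hc 6] at this; exact_mod_cast this
        have hsum : c 0 + c 1 + c 2 + c 3 + c 4 + c 5 + c 6 + c 7 = 2 * k := by
          have : ((c 0 + c 1 + c 2 + c 3 + c 4 + c 5 + c 6 + c 7 : ℤ) : ℝ) = ((2*k : ℤ) : ℝ) := by
            push_cast
            rw [← hc 0, ← hc 1, ← hc 2, ← hc 3, ← hc 4, ← hc 5, ← hc 6, ← hc 7]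
            exact hk
          exact_mod_cast this
        refine ⟨![(c 0 : ℚ), (c 4 : ℚ), (c 1 : ℚ), (c 5 : ℚ)], ⟨?_, ?_⟩, ?_⟩
        · left
          intro i
          fin_cases i
          · exact ⟨c 0, by simp⟩
          · exact ⟨c 4, by simp⟩
          · exact ⟨c 1, by simp⟩
          · exact ⟨c 5, by simp⟩
        · refine ⟨k - c 1 - c 5, ?_⟩
          rw [Fin.sum_univ_four]
          have : c 0 + c 4 + c 1 + c 5 = 2 * (k - c 1 - c 5) := by omega
          simp only [vec4_0, vec4_1, vec4_2, vec4_3]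
          exact_mod_cast this
        · funext i
          fin_cases i <;>
            simp [phiK, hc 0, hc 1, hc 4, hc 5, e21, e32, e65, e76]
      · choose c hc using h
        have c21 : c 2 = c 1 := by
          have := e21; rw [hc 2, hc 1] at this
          have : (c 2 : ℝ) = c 1 := by linarith
          exact_mod_cast this
        have c32 : c 3 = c 2 := by
          have := e32; rw [hc 3, hc 2] at this
          have : (c 3 : ℝ) = c 2 := by linarith
          exact_mod_cast this
        have c65 : c 6 = c 5 := by
          have := e65; rw [hc 6, hc 5] at this
          have : (c 6 : ℝ) = c 5 := by linarith
          exact_mod_cast this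
        have c76 : c 7 = c 6 := by
          have := e76; rw [hc 7, hc 6] at this
          have : (c 7 : ℝ) = c 6 := by linarith
          exact_mod_cast this
        have hsum : c 0 + c 1 + c 2 + c 3 + c 4 + c 5 + c 6 + c 7 + 4 = 2 * k := by
          have : ((c 0 + c 1 + c 2 + c 3 + c 4 + c 5 + c 6 + c 7 + 4 : ℤ) : ℝ) = ((2*k : ℤ) : ℝ) := by
            push_cast
            rw [hc 0, hc 1, hc 2, hc 3, hc 4, hc 5, hc 6, hc 7] at hk
            linarith
          exact_mod_cast this
        refine ⟨![(c 0 : ℚ) + 1/2, (c 4 : ℚ) + 1/2, (c 1 : ℚ) + 1/2, (c 5 : ℚ) + 1/2],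
          ⟨?_, ?_⟩, ?_⟩
        · right
          intro i
          fin_cases i
          · exact ⟨c 0, by simp⟩
          · exact ⟨c 4, by simp⟩
          · exact ⟨c 1, by simp⟩
          · exact ⟨c 5, by simp⟩
        · refine ⟨k - c 1 - c 5 - 1, ?_⟩
          rw [Fin.sum_univ_four]
          have h2 : c 0 + c 4 + c 1 + c 5 + 2 = 2 * (k - c 1 - c 5 - 1) := by
            linarith [hsum, c21, c32, c65, c76]
          simp only [vec4_0, vec4_1, vec4_2, vec4_3]
          have h3 : ((c 0 + c 4 + c 1 + c 5 + 2 : ℤ) : ℚ) = ((2 * (k - c 1 - c 5 - 1) : ℤ) : ℚ) := by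
            exact_mod_cast h2
          push_cast at h3 ⊢
          linarith
        · funext i
          fin_cases i <;>
            simp [phiK, hc 0, hc 1, hc 4, hc 5, e21, e32, e65, e76]
    · rintro ⟨m, ⟨hint, k, hk⟩, rfl⟩
      rw [Fin.sum_univ_four] at hk
      constructor
      · constructor
        · rcases hint with h | h
          · choose c hc using h
            left
            intro i
            fin_cases i <;>
              [exact ⟨c 0, by simp [phiK, hc 0]⟩; exact ⟨c 2, by simp [phiK, hc 2]⟩;
               exact ⟨c 2, by simp [phiK, hc 2]⟩; exact ⟨c 2, by simp [phiK, hc 2]⟩;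
               exact ⟨c 1, by simp [phiK, hc 1]⟩; exact ⟨c 3, by simp [phiK, hc 3]⟩;
               exact ⟨c 3, by simp [phiK, hc 3]⟩; exact ⟨c 3, by simp [phiK, hc 3]⟩]
          · choose c hc using h
            right
            intro i
            fin_cases i <;>
              [exact ⟨c 0, by simp [phiK, hc 0]⟩; exact ⟨c 2, by simp [phiK, hc 2]⟩;
               exact ⟨c 2, by simp [phiK, hc 2]⟩; exact ⟨c 2, by simp [phiK, hc 2]⟩;
               exact ⟨c 1, by simp [phiK, hc 1]⟩; exact ⟨c 3, by simp [phiK, hc 3]⟩;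
               exact ⟨c 3, by simp [phiK, hc 3]⟩; exact ⟨c 3, by simp [phiK, hc 3]⟩]
        · have key : ∃ k' : ℤ, m 0 + m 1 + 3 * m 2 + 3 * m 3 = 2 * k' := by
            rcases hint with h | h
            · choose c hc using h
              have hs : c 0 + c 1 + c 2 + c 3 = 2 * k := by
                have : ((c 0 + c 1 + c 2 + c 3 : ℤ) : ℚ) = ((2*k : ℤ) : ℚ) := by
                  push_cast
                  rw [← hc 0, ← hc 1, ← hc 2, ← hc 3]; exact hk
                exact_mod_cast this
              refine ⟨k + c 2 + c 3, ?_⟩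
              rw [hc 0, hc 1, hc 2, hc 3]
              have : c 0 + c 1 + 3 * c 2 + 3 * c 3 = 2 * (k + c 2 + c 3) := by omega
              exact_mod_cast this
            · choose c hc using h
              have hs : c 0 + c 1 + c 2 + c 3 + 2 = 2 * k := by
                have : ((c 0 + c 1 + c 2 + c 3 + 2 : ℤ) : ℚ) = ((2*k : ℤ) : ℚ) := by
                  push_cast
                  rw [hc 0, hc 1, hc 2, hc 3] at hk
                  linarith
                exact_mod_cast this
              refine ⟨k + c 2 + c 3 + 1, ?_⟩
              rw [hc 0, hc 1, hc 2, hc 3]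
              have h2 : c 0 + c 1 + 3 * c 2 + 3 * c 3 + 4 = 2 * (k + c 2 + c 3 + 1) := by omega
              have h3 : ((c 0 + c 1 + 3 * c 2 + 3 * c 3 + 4 : ℤ) : ℚ) =
                  ((2 * (k + c 2 + c 3 + 1) : ℤ) : ℚ) := by exact_mod_cast h2
              push_cast at h3 ⊢
              linarith
          obtain ⟨k', hk'⟩ := key
          refine ⟨k', ?_⟩
          rw [Fin.sum_univ_eight]
          have : ((m 0 + m 1 + 3 * m 2 + 3 * m 3 : ℚ) : ℝ) = ((2 * (k' : ℚ) : ℚ) : ℝ) := by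
            exact_mod_cast congrArg (Rat.cast : ℚ → ℝ) hk'
          push_cast at this
          simp only [phiK, vec8_0, vec8_1, vec8_2, vec8_3, vec8_4, vec8_5, vec8_6, vec8_7]
          linarith
      · funext i
        fin_cases i <;> simp [sigma3, phiK]
  · intro u v
    funext i
    fin_cases i <;> simp [phiK]
  · intro u v h
    funext i
    fin_cases i
    · have := congrFun h 0; simp [phiK] at this; exact_mod_cast this
    · have := congrFun h 4; simp [phiK] at this; exact_mod_cast this
    · have := congrFun h 1; simp [phiK] at this; exact_mod_cast this
    · have := congrFun h 5; simp [phiK] at this; exact_mod_cast this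
  · intro u _ v _
    rw [Fin.sum_univ_eight]
    simp only [phiK, bK, vec8_0, vec8_1, vec8_2, vec8_3, vec8_4, vec8_5, vec8_6, vec8_7]
    push_cast
    ring
end

section
/- The lattice K has determinant 3² = 9 (the Gram matrix of any ℤ-basis of K has determinant 9), the quotient K*/K of its dual lattice by K is isomorphic as an abelian group to ℤ/3ℤ × ℤ/3ℤ, and K has level 3, i.e., 3K* ⊆ K. -/
/-- Since `K` has full rank in `ℚ⁴`, the dual lattice `K*` consists of the
vectors of `ℚ⁴` pairing integrally with `K`. -/
def Kdual : Set (Fin 4 → ℚ) := {y | ∀ x ∈ Klat, ∃ k : ℤ, bK y x = k}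

/-- `K` as an additive subgroup of `ℚ⁴`. -/
def KlatSub : AddSubgroup (Fin 4 → ℚ) where
  carrier := Klat
  zero_mem' := ⟨Or.inl fun _ => ⟨0, by simp⟩, 0, by simp⟩
  add_mem' := by
    rintro x y ⟨hx, kx, hkx⟩ ⟨hy, ky, hky⟩
    constructor
    · rcases hx with hx | hx <;> rcases hy with hy | hy
      · exact Or.inl fun i => by
          obtain ⟨a, ha⟩ := hx i; obtain ⟨b, hb⟩ := hy i
          exact ⟨a + b, by simp [ha, hb]⟩
      · exact Or.inr fun i => by
          obtain ⟨a, ha⟩ := hx i; obtain ⟨b, hb⟩ := hy i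
          exact ⟨a + b, by simp [ha, hb]; ring⟩
      · exact Or.inr fun i => by
          obtain ⟨a, ha⟩ := hx i; obtain ⟨b, hb⟩ := hy i
          exact ⟨a + b, by simp [ha, hb]; ring⟩
      · exact Or.inl fun i => by
          obtain ⟨a, ha⟩ := hx i; obtain ⟨b, hb⟩ := hy i
          exact ⟨a + b + 1, by simp [ha, hb]; ring⟩
    · exact ⟨kx + ky, by
        simp only [Pi.add_apply, Finset.sum_add_distrib, hkx, hky]; push_cast; ring⟩
  neg_mem' := by
    rintro x ⟨hx, kx, hkx⟩
    constructor
    · rcases hx with hx | hx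
      · exact Or.inl fun i => by
          obtain ⟨a, ha⟩ := hx i; exact ⟨-a, by simp [ha]⟩
      · exact Or.inr fun i => by
          obtain ⟨a, ha⟩ := hx i
          exact ⟨-a - 1, by simp [ha]; ring⟩
    · exact ⟨-kx, by
        simp only [Pi.neg_apply, Finset.sum_neg_distrib, hkx]; push_cast; ring⟩

/-- `K*` as an additive subgroup of `ℚ⁴`. -/
def KdualSub : AddSubgroup (Fin 4 → ℚ) where
  carrier := Kdual
  zero_mem' := fun x _ => ⟨0, by simp [bK]⟩
  add_mem' := by
    intro a b ha hb x hx
    obtain ⟨k, hk⟩ := ha x hx; obtain ⟨l, hl⟩ := hb x hx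
    exact ⟨k + l, by simp only [bK, Pi.add_apply] at *; push_cast; linarith⟩
  neg_mem' := by
    intro a ha x hx
    obtain ⟨k, hk⟩ := ha x hx
    exact ⟨-k, by simp only [bK, Pi.neg_apply] at *; push_cast; linarith⟩

/-!
`kBasis` is a `ℤ`-basis of `K` and `kDualBasis` is its dual basis with respect to `bK`, so the
coordinates `dᵢ = bK y (kBasis i)` identify `K*` with `ℤ⁴`. Since `kDualBasis 0`, `kDualBasis 1`,
`3 • kDualBasis 2`, `3 • kDualBasis 3` lie in `K` while `kBasis 2`, `kBasis 3` lie in `3K*`, the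
lattice `K` is cut out of `K*` by `3 ∣ d₂` and `3 ∣ d₃`. Hence `y ↦ (d₂, d₃) mod 3` identifies
`K*/K` with `(ℤ/3)²`, and `3K* ⊆ K`. Two `ℤ`-bases of `K` differ by an integer matrix of
determinant `±1`, so every Gram determinant equals `det (kBasis)² · det diag(1, 1, 3, 3) = 9`.
-/

open Matrix

theorem AddSubgroup.sum_intCast_smul_mem {R V ι : Type*} [Ring R] [AddCommGroup V] [Module R V]
    [Fintype ι] (S : AddSubgroup V) (c : ι → ℤ) {v : ι → V} (hv : ∀ i, v i ∈ S) :
    ∑ i, (c i : R) • v i ∈ S :=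
  S.sum_mem fun i _ => by rw [Int.cast_smul_eq_zsmul]; exact S.zsmul_mem (hv i) _

theorem Matrix.exists_map_intCast_mul_eq {ι : Type*} [Fintype ι] {B U : Matrix ι ι ℚ}
    (h : ∀ i, ∃ c : ι → ℤ, B i = ∑ j, (c j : ℚ) • U j) :
    ∃ Q : Matrix ι ι ℤ, B = Q.map (↑) * U := by
  choose Q hQ using h
  refine ⟨Matrix.of Q, ?_⟩
  ext i k
  simp [hQ i, mul_apply, Finset.sum_apply]

theorem Matrix.det_mul_mul_transpose_eq_of_intSpan_eq {ι : Type*} [Fintype ι] [DecidableEq ι]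
    {U B : Matrix ι ι ℚ} (D : Matrix ι ι ℚ) (hU : U.det ≠ 0)
    (h : ∀ x, (∃ c : ι → ℤ, x = ∑ i, (c i : ℚ) • U i) ↔ ∃ c : ι → ℤ, x = ∑ i, (c i : ℚ) • B i) :
    (B * D * Bᵀ).det = (U * D * Uᵀ).det := by
  have mem_self (M : Matrix ι ι ℚ) (i : ι) : ∃ c : ι → ℤ, M i = ∑ j, (c j : ℚ) • M j :=
    ⟨Pi.single i 1, by simp [Pi.single_apply, Fintype.sum_ite_eq' i M]⟩
  obtain ⟨Q, rfl⟩ := exists_map_intCast_mul_eq fun i => (h _).2 (mem_self B i)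
  obtain ⟨P, hP⟩ := exists_map_intCast_mul_eq fun i => (h _).1 (mem_self U i)
  have hPQ : (P.det * Q.det : ℚ) = 1 := by
    refine mul_right_cancel₀ hU ?_
    rw [one_mul, Int.cast_det, Int.cast_det, ← det_mul, ← det_mul, Matrix.mul_assoc, ← hP]
  have hQ : (Q.det : ℚ) ^ 2 = 1 := by
    rcases Int.eq_one_or_neg_one_of_mul_eq_one' (by exact_mod_cast hPQ) with ⟨-, hQ⟩ | ⟨-, hQ⟩ <;>
      simp [hQ]
  simp only [det_mul, det_transpose, ← Int.cast_det]
  linear_combination (D.det * U.det ^ 2) * hQ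

theorem bK_add_left (u v w : Fin 4 → ℚ) : bK (u + v) w = bK u w + bK v w := by
  simp only [bK, Pi.add_apply]; ring

theorem gram_bK_eq (u : Fin 4 → Fin 4 → ℚ) :
    Matrix.of (fun i j => bK (u i) (u j)) =
      Matrix.of u * diagonal ![1, 1, 3, 3] * (Matrix.of u)ᵀ := by
  ext i j
  simp [mul_apply, Fin.sum_univ_four, bK]
  ring

theorem exists_intCast_add_half_of_mem_Klat {x : Fin 4 → ℚ} (hx : x ∈ Klat) :
    ∃ (k : Fin 4 → ℤ) (s : ℤ), ∀ i, x i = k i + s / 2 := by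
  rcases hx.1 with hx | hx <;> choose k hk using hx
  · exact ⟨k, 0, by simpa using hk⟩
  · exact ⟨k, 1, by simpa using hk⟩

def kBasis : Fin 4 → Fin 4 → ℚ :=
  ![![1, 1, 0, 0], ![1, -1, 0, 0], ![-3, 0, 1, 0], ![-3/2, -3/2, 1/2, 1/2]]

def kDualBasis : Fin 4 → Fin 4 → ℚ :=
  ![![1/2, 1/2, 1/2, 1/2], ![1/2, -1/2, 1/2, -1/2], ![0, 0, 1/3, -1/3], ![0, 0, 0, 2/3]]

theorem bK_kDualBasis_kBasis (i j : Fin 4) :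
    bK (kDualBasis j) (kBasis i) = if i = j then 1 else 0 := by
  fin_cases i <;> fin_cases j <;> simp [bK, kBasis, kDualBasis, cons_val] <;> norm_num

theorem sum_bK_kDualBasis_smul_kBasis (x : Fin 4 → ℚ) :
    ∑ i, bK (kDualBasis i) x • kBasis i = x := by
  funext j; fin_cases j <;> simp [Fin.sum_univ_four, bK, kDualBasis, kBasis] <;> ring

theorem sum_bK_kBasis_smul_kDualBasis (y : Fin 4 → ℚ) :
    ∑ i, bK y (kBasis i) • kDualBasis i = y := by
  funext j; fin_cases j <;> simp [Fin.sum_univ_four, bK, kDualBasis, kBasis] <;> ring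

theorem det_kBasis : (Matrix.of kBasis).det = -1 := by
  simp [det_succ_row_zero, Fin.sum_univ_succ, kBasis, Fin.succAbove]
  norm_num

theorem det_gram_kBasis :
    (Matrix.of kBasis * diagonal ![1, 1, 3, 3] * (Matrix.of kBasis)ᵀ).det = 9 := by
  rw [det_mul, det_mul, det_transpose, det_kBasis, det_diagonal, Fin.prod_univ_four]
  simp
  norm_num

theorem kBasis_mem_Klat (i : Fin 4) : kBasis i ∈ Klat := by
  fin_cases i
  · exact ⟨Or.inl fun j => ⟨![1, 1, 0, 0] j, by fin_cases j <;> simp [kBasis]⟩, 1,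
      by simp [kBasis, Fin.sum_univ_four]; norm_num⟩
  · exact ⟨Or.inl fun j => ⟨![1, -1, 0, 0] j, by fin_cases j <;> simp [kBasis]⟩, 0,
      by simp [kBasis, Fin.sum_univ_four]⟩
  · exact ⟨Or.inl fun j => ⟨![-3, 0, 1, 0] j, by fin_cases j <;> simp [kBasis]⟩, -1,
      by simp [kBasis, Fin.sum_univ_four]; norm_num⟩
  · exact ⟨Or.inr fun j => ⟨![-2, -2, 0, 0] j, by fin_cases j <;> simp [kBasis] <;> norm_num⟩, -1,
      by simp [kBasis, Fin.sum_univ_four]; norm_num⟩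

theorem kDualBasis_mem_Kdual (i : Fin 4) : kDualBasis i ∈ Kdual := by
  intro x hx
  obtain ⟨k, s, hk⟩ := exists_intCast_add_half_of_mem_Klat hx
  obtain ⟨-, m, hm⟩ := hx
  simp only [Fin.sum_univ_four, hk] at hm
  fin_cases i
  · exact ⟨m + k 2 + k 3 + s, by simp [bK, kDualBasis, hk]; linarith⟩
  · exact ⟨m - k 1 + k 2 - 2 * k 3 - s, by simp [bK, kDualBasis, hk]; linarith⟩
  · exact ⟨k 2 - k 3, by simp [bK, kDualBasis, hk]; ring⟩
  · exact ⟨2 * k 3 + s, by simp [bK, kDualBasis, hk]; ring⟩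

theorem mem_Klat_iff_exists_sum_kBasis (x : Fin 4 → ℚ) :
    x ∈ Klat ↔ ∃ c : Fin 4 → ℤ, x = ∑ i, (c i : ℚ) • kBasis i := by
  constructor
  · intro hx
    choose c hc using fun i => kDualBasis_mem_Kdual i x hx
    exact ⟨c, by simp only [← hc, sum_bK_kDualBasis_smul_kBasis]⟩
  · rintro ⟨c, rfl⟩
    exact KlatSub.sum_intCast_smul_mem c kBasis_mem_Klat

theorem mem_Klat_iff_forall_bK_kDualBasis (x : Fin 4 → ℚ) :
    x ∈ Klat ↔ ∀ i, ∃ k : ℤ, bK (kDualBasis i) x = k := by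
  refine ⟨fun hx i => kDualBasis_mem_Kdual i x hx, fun h => ?_⟩
  choose c hc using h
  exact (mem_Klat_iff_exists_sum_kBasis x).2 ⟨c, by simp only [← hc, sum_bK_kDualBasis_smul_kBasis]⟩

theorem mem_Kdual_iff_forall_bK_kBasis (y : Fin 4 → ℚ) :
    y ∈ Kdual ↔ ∀ i, ∃ k : ℤ, bK y (kBasis i) = k := by
  refine ⟨fun hy i => hy _ (kBasis_mem_Klat i), fun h => ?_⟩
  choose c hc using h
  rw [← sum_bK_kBasis_smul_kDualBasis y]
  simp only [hc]
  exact KdualSub.sum_intCast_smul_mem c kDualBasis_mem_Kdual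

theorem three_smul_kDualBasis_mem_Klat (i : Fin 4) : (3 : ℚ) • kDualBasis i ∈ Klat := by
  rw [mem_Klat_iff_forall_bK_kDualBasis]
  intro j
  refine ⟨⌊bK (kDualBasis j) ((3 : ℚ) • kDualBasis i)⌋, ?_⟩
  fin_cases i <;> fin_cases j <;> simp [bK, kDualBasis, cons_val] <;> norm_num

theorem kDualBasis_mem_Klat_of_lt_two (i : Fin 4) (hi : i < 2) : kDualBasis i ∈ Klat := by
  rw [mem_Klat_iff_forall_bK_kDualBasis]
  intro j
  refine ⟨⌊bK (kDualBasis j) (kDualBasis i)⌋, ?_⟩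
  fin_cases i <;> simp at hi <;> fin_cases j <;> simp [bK, kDualBasis, cons_val] <;> norm_num

theorem inv_three_smul_kBasis_mem_Kdual (i : Fin 4) (hi : 2 ≤ i) :
    (3 : ℚ)⁻¹ • kBasis i ∈ Kdual := by
  rw [mem_Kdual_iff_forall_bK_kBasis]
  intro j
  refine ⟨⌊bK ((3 : ℚ)⁻¹ • kBasis i) (kBasis j)⌋, ?_⟩
  fin_cases i <;> simp at hi <;> fin_cases j <;> simp [bK, kBasis, cons_val] <;> norm_num

theorem three_smul_mem_Klat_of_mem_Kdual {y : Fin 4 → ℚ} (hy : y ∈ Kdual) :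
    (3 : ℚ) • y ∈ Klat := by
  choose d hd using (mem_Kdual_iff_forall_bK_kBasis y).1 hy
  rw [← sum_bK_kBasis_smul_kDualBasis y, Finset.smul_sum]
  simp only [hd, smul_comm (3 : ℚ)]
  exact KlatSub.sum_intCast_smul_mem d three_smul_kDualBasis_mem_Klat

noncomputable def dualCoord (i : Fin 4) : KdualSub →+ ℤ where
  toFun y := ⌊bK y (kBasis i)⌋
  map_zero' := by simp [bK]
  map_add' y z := by
    obtain ⟨k, hk⟩ := y.2 _ (kBasis_mem_Klat i)
    obtain ⟨l, hl⟩ := z.2 _ (kBasis_mem_Klat i)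
    simp only [AddSubgroup.coe_add, bK_add_left, hk, hl, ← Int.cast_add, Int.floor_intCast]

theorem dualCoord_spec (i : Fin 4) (y : KdualSub) : (dualCoord i y : ℚ) = bK y (kBasis i) := by
  obtain ⟨k, hk⟩ := y.2 _ (kBasis_mem_Klat i)
  simp [dualCoord, hk]

noncomputable def discrMap : KdualSub →+ ZMod 3 × ZMod 3 :=
  ((Int.castAddHom (ZMod 3)).comp (dualCoord 2)).prod ((Int.castAddHom (ZMod 3)).comp (dualCoord 3))

theorem three_dvd_dualCoord_of_mem_Klat {y : KdualSub} (hy : (y : Fin 4 → ℚ) ∈ Klat)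
    (i : Fin 4) (hi : 2 ≤ i) : 3 ∣ dualCoord i y := by
  obtain ⟨k, hk⟩ := inv_three_smul_kBasis_mem_Kdual i hi _ hy
  refine ⟨k, Int.cast_injective (α := ℚ) ?_⟩
  rw [Int.cast_mul, ← hk, dualCoord_spec]
  simp only [bK, Pi.smul_apply, smul_eq_mul]
  ring

theorem mem_Klat_of_three_dvd_dualCoord {y : KdualSub} (h2 : 3 ∣ dualCoord 2 y)
    (h3 : 3 ∣ dualCoord 3 y) : (y : Fin 4 → ℚ) ∈ Klat := by
  obtain ⟨a, ha⟩ := h2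
  obtain ⟨b, hb⟩ := h3
  have hy : (y : Fin 4 → ℚ) = dualCoord 0 y • kDualBasis 0 + dualCoord 1 y • kDualBasis 1
      + a • ((3 : ℚ) • kDualBasis 2) + b • ((3 : ℚ) • kDualBasis 3) := by
    conv_lhs => rw [← sum_bK_kBasis_smul_kDualBasis y]
    simp only [Fin.sum_univ_four, ← dualCoord_spec, ha, hb, ← Int.cast_smul_eq_zsmul ℚ]
    push_cast
    module
  rw [hy]
  exact add_mem (add_mem (add_mem
    (zsmul_mem (show _ ∈ KlatSub from kDualBasis_mem_Klat_of_lt_two 0 (by decide)) _)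
    (zsmul_mem (show _ ∈ KlatSub from kDualBasis_mem_Klat_of_lt_two 1 (by decide)) _))
    (zsmul_mem (show _ ∈ KlatSub from three_smul_kDualBasis_mem_Klat 2) _))
    (zsmul_mem (show _ ∈ KlatSub from three_smul_kDualBasis_mem_Klat 3) _)

theorem ker_discrMap : discrMap.ker = KlatSub.addSubgroupOf KdualSub := by
  ext y
  simp only [AddMonoidHom.mem_ker, AddSubgroup.mem_addSubgroupOf, discrMap, AddMonoidHom.prod_apply,
    AddMonoidHom.comp_apply, Int.coe_castAddHom, Prod.mk_eq_zero, ZMod.intCast_zmod_eq_zero_iff_dvd]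
  exact ⟨fun h => mem_Klat_of_three_dvd_dualCoord (by exact_mod_cast h.1) (by exact_mod_cast h.2),
    fun hy => ⟨by exact_mod_cast three_dvd_dualCoord_of_mem_Klat hy 2 (by decide),
      by exact_mod_cast three_dvd_dualCoord_of_mem_Klat hy 3 (by decide)⟩⟩

theorem dualCoord_kDualBasis (i j : Fin 4) :
    dualCoord i ⟨kDualBasis j, kDualBasis_mem_Kdual j⟩ = if i = j then 1 else 0 := by
  have h := dualCoord_spec i ⟨kDualBasis j, kDualBasis_mem_Kdual j⟩
  rw [bK_kDualBasis_kBasis] at h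
  exact_mod_cast h

theorem discrMap_surjective : Function.Surjective discrMap := by
  rintro ⟨a, b⟩
  obtain ⟨m, rfl⟩ := ZMod.intCast_surjective a
  obtain ⟨n, rfl⟩ := ZMod.intCast_surjective b
  refine ⟨m • ⟨kDualBasis 2, kDualBasis_mem_Kdual 2⟩ + n • ⟨kDualBasis 3, kDualBasis_mem_Kdual 3⟩,
    ?_⟩
  simp [discrMap, dualCoord_kDualBasis]

/-- `K` has determinant `9` (the Gram matrix of any `ℤ`-basis of `K`
has determinant `9`), the quotient `K*/K` is isomorphic as an abelian group to
`ℤ/3ℤ × ℤ/3ℤ`, and `K` has level `3`, i.e. `3K* ⊆ K`. -/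
theorem Klat_det_discriminantGroup_level :
    (∀ b : Fin 4 → (Fin 4 → ℚ),
      (∀ x, x ∈ Klat ↔ ∃ c : Fin 4 → ℤ, x = ∑ i, (c i : ℚ) • b i) →
      Matrix.det (Matrix.of fun i j => bK (b i) (b j)) = 9) ∧
    Nonempty ((KdualSub ⧸ KlatSub.addSubgroupOf KdualSub) ≃+ ZMod 3 × ZMod 3) ∧
    (∀ y ∈ Kdual, (3 : ℚ) • y ∈ Klat) := by
  refine ⟨fun b hb => ?_, ?_, fun y => three_smul_mem_Klat_of_mem_Kdual⟩
  · have hspan (x : Fin 4 → ℚ) : (∃ c : Fin 4 → ℤ, x = ∑ i, (c i : ℚ) • Matrix.of kBasis i) ↔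
        ∃ c : Fin 4 → ℤ, x = ∑ i, (c i : ℚ) • Matrix.of b i :=
      (mem_Klat_iff_exists_sum_kBasis x).symm.trans (hb x)
    rw [gram_bK_eq, det_mul_mul_transpose_eq_of_intSpan_eq _ (by simp [det_kBasis]) hspan,
      det_gram_kBasis]
  · exact ⟨(QuotientAddGroup.quotientAddEquivOfEq ker_discrMap.symm).trans
      (QuotientAddGroup.quotientKerEquivOfSurjective _ discrMap_surjective)⟩
end

section
/- The orthogonal complement of the fixed-point sublattice E₈^σ = {x ∈ E₈ : σ(x) = x} in E₈, namely {x ∈ E₈ : (x,y) = 0 for all y ∈ E₈^σ}, is isometric to the lattice A₂ ⊕ A₂. -/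
/-- The lattice `A₂ ⊕ A₂` inside `ℤ⁶`: first three and last three coordinates
each sum to zero. -/
def A2A2set : Set (Fin 6 → ℤ) := {v | v 0 + v 1 + v 2 = 0 ∧ v 3 + v 4 + v 5 = 0}

/-- The orthogonal complement of the fixed-point sublattice `E₈^σ` in `E₈`. -/
def E8sigmaPerp : Set (Fin 8 → ℝ) :=
  {x | x ∈ E8 ∧ ∀ y, (y ∈ E8 ∧ sigma3 y = y) → ∑ i, x i * y i = 0}

private lemma v8_5 {α : Type*} (a b c d e f g h : α) : ![a,b,c,d,e,f,g,h] 5 = f := rfl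
private lemma v8_6 {α : Type*} (a b c d e f g h : α) : ![a,b,c,d,e,f,g,h] 6 = g := rfl
private lemma v8_7 {α : Type*} (a b c d e f g h : α) : ![a,b,c,d,e,f,g,h] 7 = h := rfl
private lemma v6_3 {α : Type*} (a b c d e f : α) : ![a,b,c,d,e,f] 3 = d := rfl
private lemma v6_4 {α : Type*} (a b c d e f : α) : ![a,b,c,d,e,f] 4 = e := rfl
private lemma v6_5 {α : Type*} (a b c d e f : α) : ![a,b,c,d,e,f] 5 = f := rfl

/-- the orthogonal complement of `E₈^σ` in `E₈` is isometric to
`A₂ ⊕ A₂`: there is an additive bijection from `A₂ ⊕ A₂` onto the orthogonal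
complement preserving the bilinear forms. -/
theorem E8_sigma_perp_isometric_A2A2 :
    ∃ f : (Fin 6 → ℤ) → (Fin 8 → ℝ),
      (∀ u ∈ A2A2set, ∀ v ∈ A2A2set, f (u + v) = f u + f v) ∧
      Set.InjOn f A2A2set ∧
      f '' A2A2set = E8sigmaPerp ∧
      (∀ u ∈ A2A2set, ∀ v ∈ A2A2set,
        ∑ i, f u i * f v i = ((∑ i, u i * v i : ℤ) : ℝ)) := by
  classical
  refine ⟨fun u => ![0, (u 0 : ℝ), u 1, u 2, 0, u 3, u 4, u 5], ?_, ?_, ?_, ?_⟩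
  · intro u _ v _
    funext i
    fin_cases i <;> simp [v8_5, v8_6, v8_7] <;> push_cast <;> ring
  · intro u hu v hv h
    funext j
    fin_cases j
    · have := congrFun h 1; simp [v8_5, v8_6, v8_7] at this; exact_mod_cast this
    · have := congrFun h 2; simp [v8_5, v8_6, v8_7] at this; exact_mod_cast this
    · have := congrFun h 3; simp [v8_5, v8_6, v8_7] at this; exact_mod_cast this
    · have := congrFun h 5; simp [v8_5, v8_6, v8_7] at this; exact_mod_cast this
    · have := congrFun h 6; simp [v8_5, v8_6, v8_7] at this; exact_mod_cast this
    · have := congrFun h 7; simp [v8_5, v8_6, v8_7] at this; exact_mod_cast this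
  · ext x
    constructor
    · rintro ⟨u, hu, rfl⟩
      refine ⟨⟨Or.inl ?_, ⟨0, ?_⟩⟩, ?_⟩
      · intro i
        fin_cases i
        exacts [⟨0, by simp⟩, ⟨u 0, by simp⟩, ⟨u 1, by simp⟩, ⟨u 2, by simp⟩,
          ⟨0, by simp⟩, ⟨u 3, by simp [v8_5]⟩, ⟨u 4, by simp [v8_6]⟩, ⟨u 5, by simp [v8_7]⟩]
      · have c1 : ((u 0 + u 1 + u 2 : ℤ) : ℝ) = 0 := by rw [hu.1]; simp
        have c2 : ((u 3 + u 4 + u 5 : ℤ) : ℝ) = 0 := by rw [hu.2]; simp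
        simp [Fin.sum_univ_eight, v8_5, v8_6, v8_7]
        push_cast at c1 c2
        linarith
      · rintro y ⟨hyE8, hyfix⟩
        have h1 : y 2 = y 1 := by simpa [sigma3] using congrFun hyfix 1
        have h2 : y 3 = y 2 := by simpa [sigma3] using congrFun hyfix 2
        have h3 : y 6 = y 5 := by simpa [sigma3, v8_5, v8_6, v8_7] using congrFun hyfix 5
        have h4 : y 7 = y 6 := by simpa [sigma3, v8_5, v8_6, v8_7] using congrFun hyfix 6
        have c1 : ((u 0 + u 1 + u 2 : ℤ) : ℝ) = 0 := by rw [hu.1]; simp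
        have c2 : ((u 3 + u 4 + u 5 : ℤ) : ℝ) = 0 := by rw [hu.2]; simp
        push_cast at c1 c2
        simp [Fin.sum_univ_eight, v8_5, v8_6, v8_7, h1, h2, h3, h4]
        linear_combination y 1 * c1 + y 5 * c2
    · rintro ⟨⟨hint, _⟩, hperp⟩
      have mem1 : (![2, 0, 0, 0, 0, 0, 0, 0] : Fin 8 → ℝ) ∈ E8 ∧
          sigma3 ![2, 0, 0, 0, 0, 0, 0, 0] = ![2, 0, 0, 0, 0, 0, 0, 0] := by
        refine ⟨⟨Or.inl fun i => ?_, ⟨1, by simp [Fin.sum_univ_eight, v8_5, v8_6, v8_7]⟩⟩, ?_⟩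
        · fin_cases i
          exacts [⟨2, by simp⟩, ⟨0, by simp⟩, ⟨0, by simp⟩, ⟨0, by simp⟩,
            ⟨0, by simp⟩, ⟨0, by simp [v8_5]⟩, ⟨0, by simp [v8_6]⟩, ⟨0, by simp [v8_7]⟩]
        · funext i; fin_cases i <;> rfl
      have mem2 : (![0, 0, 0, 0, 2, 0, 0, 0] : Fin 8 → ℝ) ∈ E8 ∧
          sigma3 ![0, 0, 0, 0, 2, 0, 0, 0] = ![0, 0, 0, 0, 2, 0, 0, 0] := by
        refine ⟨⟨Or.inl fun i => ?_, ⟨1, by simp [Fin.sum_univ_eight, v8_5, v8_6, v8_7]⟩⟩, ?_⟩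
        · fin_cases i
          exacts [⟨0, by simp⟩, ⟨0, by simp⟩, ⟨0, by simp⟩, ⟨0, by simp⟩,
            ⟨2, by simp⟩, ⟨0, by simp [v8_5]⟩, ⟨0, by simp [v8_6]⟩, ⟨0, by simp [v8_7]⟩]
        · funext i; fin_cases i <;> rfl
      have mem3 : (![1, 1, 1, 1, 0, 0, 0, 0] : Fin 8 → ℝ) ∈ E8 ∧
          sigma3 ![1, 1, 1, 1, 0, 0, 0, 0] = ![1, 1, 1, 1, 0, 0, 0, 0] := by
        refine ⟨⟨Or.inl fun i => ?_, ⟨2, by simp [Fin.sum_univ_eight, v8_5, v8_6, v8_7]; norm_num⟩⟩, ?_⟩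
        · fin_cases i
          exacts [⟨1, by simp⟩, ⟨1, by simp⟩, ⟨1, by simp⟩, ⟨1, by simp⟩,
            ⟨0, by simp⟩, ⟨0, by simp [v8_5]⟩, ⟨0, by simp [v8_6]⟩, ⟨0, by simp [v8_7]⟩]
        · funext i; fin_cases i <;> rfl
      have mem4 : (![0, 0, 0, 0, 1, 1, 1, 1] : Fin 8 → ℝ) ∈ E8 ∧
          sigma3 ![0, 0, 0, 0, 1, 1, 1, 1] = ![0, 0, 0, 0, 1, 1, 1, 1] := by
        refine ⟨⟨Or.inl fun i => ?_, ⟨2, by simp [Fin.sum_univ_eight, v8_5, v8_6, v8_7]; norm_num⟩⟩, ?_⟩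
        · fin_cases i
          exacts [⟨0, by simp⟩, ⟨0, by simp⟩, ⟨0, by simp⟩, ⟨0, by simp⟩,
            ⟨1, by simp⟩, ⟨1, by simp [v8_5]⟩, ⟨1, by simp [v8_6]⟩, ⟨1, by simp [v8_7]⟩]
        · funext i; fin_cases i <;> rfl
      have e1 := hperp _ mem1
      have e2 := hperp _ mem2
      have e3 := hperp _ mem3
      have e4 := hperp _ mem4
      simp [Fin.sum_univ_eight, v8_5, v8_6, v8_7] at e1 e2 e3 e4
      have hx0 : x 0 = 0 := by linarith
      have hx4 : x 4 = 0 := by linarith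
      have hs1 : x 1 + x 2 + x 3 = 0 := by linarith
      have hs2 : x 5 + x 6 + x 7 = 0 := by linarith
      have hintZ : ∀ i, ∃ k : ℤ, x i = k := by
        rcases hint with h | h
        · exact h
        · exfalso
          obtain ⟨k, hk⟩ := h 0
          rw [hx0] at hk
          have : ((2 * k : ℤ) : ℝ) = -1 := by push_cast; linarith
          have h2 : (2 * k : ℤ) = -1 := by exact_mod_cast this
          omega
      choose k hk using hintZ
      refine ⟨![k 1, k 2, k 3, k 5, k 6, k 7], ⟨?_, ?_⟩, ?_⟩
      · have : ((k 1 + k 2 + k 3 : ℤ) : ℝ) = 0 := by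
          push_cast; rw [← hk 1, ← hk 2, ← hk 3]; linarith
        show k 1 + k 2 + k 3 = 0
        exact_mod_cast this
      · have : ((k 5 + k 6 + k 7 : ℤ) : ℝ) = 0 := by
          push_cast; rw [← hk 5, ← hk 6, ← hk 7]; linarith
        show k 5 + k 6 + k 7 = 0
        exact_mod_cast this
      · funext i
        fin_cases i <;>
          simp [v8_5, v8_6, v8_7, v6_3, v6_4, v6_5, hx0, hx4,
            ← hk 1, ← hk 2, ← hk 3, ← hk 5, ← hk 6, ← hk 7]
  · intro u _ v _
    simp [Fin.sum_univ_eight, Fin.sum_univ_six, v8_5, v8_6, v8_7, v6_3, v6_4, v6_5]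
end

section
/- Let h be the arithmetic function h(n) = (−1)ⁿ/n (with values in ℚ). Define g by: g(n) = μ(n)·(−1)ⁿ/n if n is odd (μ the Möbius function), and g(n) = f(n) if n is even, where f(n) = 0 if n is divisible by d² for some odd d > 1, and otherwise f(n) = (−1)^k/(p₁⋯p_k) with p₁,…,p_k the distinct primes dividing n. Then g is the Dirichlet-convolution inverse of h: for every n ≥ 1, ∑_{d | n} h(d)·g(n/d) = 1 if n = 1 and 0 otherwise. -/
open scoped Classical

/-- The arithmetic function `h(n) = (−1)ⁿ/n`. -/
def hfun (n : ℕ) : ℚ := (-1) ^ n / n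

/-- `f(n) = 0` if `n` is divisible by `d²` for some odd `d > 1`, and otherwise
`f(n) = (−1)^k/(p₁⋯p_k)` where `p₁, …, p_k` are the distinct primes dividing `n`. -/
noncomputable def ffun (n : ℕ) : ℚ :=
  if ∃ d : ℕ, 1 < d ∧ Odd d ∧ d ^ 2 ∣ n then 0
  else (-1) ^ n.primeFactors.card / ∏ p ∈ n.primeFactors, (p : ℚ)

/-- `g(n) = μ(n)·(−1)ⁿ/n` for odd `n` and `g(n) = f(n)` for even `n`. -/
noncomputable def gfun (n : ℕ) : ℚ :=
  if Odd n then (ArithmeticFunction.moebius n : ℚ) * (-1) ^ n / n else ffun n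

/-!
Both `h` and `g` are the negatives of multiplicative functions: `-h(n) = ε(n)/n` with
`ε(n) = -1` for even and `1` for odd `n`, and `-g(n) = c(n) μ(m)/m` with `m` the odd part of `n`
and `c(n) = 1/2` for even, `1` for odd `n`. Hence `h * g = 1` may be checked on prime powers.
On odd numbers the two functions are `1/n` and `μ(n)/n`, whose convolution is `(μ * ζ)(n)/n`.
On `1, 2, 4, …` they take the values `1, -1/2, -1/4, …` and `1, 1/2, 1/2, …`, and the
convolution at `2^k` is `(1/2)(1 - 1/2 - ⋯ - 1/2^(k-1)) - 1/2^k = 0`.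
-/

open Finset
open scoped ArithmeticFunction.Moebius

namespace ArithmeticFunction

variable {R : Type*}

def ifDvd [Zero R] [One R] (p : ℕ) (a : R) : ArithmeticFunction R :=
  ⟨fun n => if n = 0 then 0 else if p ∣ n then a else 1, if_pos rfl⟩

theorem ifDvd_apply [Zero R] [One R] {p n : ℕ} (a : R) (hn : n ≠ 0) :
    ifDvd p a n = if p ∣ n then a else 1 :=
  if_neg hn

theorem isMultiplicative_ifDvd [MonoidWithZero R] {p : ℕ} (hp : p.Prime) (a : R) :
    (ifDvd p a).IsMultiplicative := by
  rw [IsMultiplicative.iff_ne_zero]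
  refine ⟨by simp [ifDvd_apply, hp.not_dvd_one], fun {m n} hm hn hmn => ?_⟩
  rw [ifDvd_apply a (mul_ne_zero hm hn), ifDvd_apply a hm, ifDvd_apply a hn]
  by_cases hpm : p ∣ m
  · have hpn : ¬p ∣ n := fun hpn => hp.not_dvd_one (hmn ▸ Nat.dvd_gcd hpm hpn)
    simp [hpm, hpn, dvd_mul_of_dvd_left hpm]
  · simp [hpm, hp.dvd_mul]

def compOrdCompl [Zero R] (f : ArithmeticFunction R) (p : ℕ) : ArithmeticFunction R :=
  ⟨fun n => f (ordCompl[p] n), by simp⟩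

theorem compOrdCompl_apply [Zero R] (f : ArithmeticFunction R) (p n : ℕ) :
    f.compOrdCompl p n = f (ordCompl[p] n) :=
  rfl

theorem IsMultiplicative.compOrdCompl [MonoidWithZero R] {f : ArithmeticFunction R}
    (hf : f.IsMultiplicative) (p : ℕ) : (f.compOrdCompl p).IsMultiplicative := by
  refine ⟨by simp [compOrdCompl_apply, hf.map_one], fun {m n} hmn => ?_⟩
  rw [compOrdCompl_apply, compOrdCompl_apply, compOrdCompl_apply, Nat.ordCompl_mul]
  exact hf.map_mul_of_coprime
    ((hmn.coprime_dvd_left (Nat.ordCompl_dvd m p)).coprime_dvd_right (Nat.ordCompl_dvd n p))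

theorem mul_apply_eq_sum_divisors [Semiring R] {f g : ArithmeticFunction R} {n : ℕ} :
    (f * g) n = ∑ d ∈ n.divisors, f d * g (n / d) := by
  rw [mul_apply, Nat.sum_divisorsAntidiagonal (fun a b => f a * g b)]

theorem mul_apply_prime_pow [Semiring R] {f g : ArithmeticFunction R} {p : ℕ} (hp : p.Prime)
    (k : ℕ) : (f * g) (p ^ k) = ∑ i ∈ range (k + 1), f (p ^ i) * g (p ^ (k - i)) := by
  rw [mul_apply_eq_sum_divisors, Nat.sum_divisors_prime_pow hp]
  refine sum_congr rfl fun i hi => ?_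
  rw [Nat.pow_div (by simp at hi; omega) hp.pos]

theorem sum_divisors_moebius [Ring R] (n : ℕ) :
    ∑ d ∈ n.divisors, (μ d : R) = (1 : ArithmeticFunction R) n := by
  rw [← coe_moebius_mul_coe_zeta, coe_mul_zeta_apply]
  simp only [intCoe_apply]

theorem moebius_two_mul {m : ℕ} (hm : Odd m) : μ (2 * m) = -μ m := by
  rw [isMultiplicative_moebius.map_mul_of_coprime (Nat.coprime_two_left.mpr hm),
    moebius_apply_prime Nat.prime_two, neg_one_mul]

theorem moebius_div_eq_of_squarefree [Field R] {m : ℕ} (hm : Squarefree m) :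
    (μ m : R) / m = (-1) ^ #m.primeFactors / ∏ p ∈ m.primeFactors, (p : R) := by
  rw [← Nat.cast_prod, Nat.prod_primeFactors_of_squarefree hm, moebius_apply_of_squarefree hm,
    ← (cardDistinctFactors_eq_cardFactors_iff_squarefree hm.ne_zero).mpr hm,
    cardDistinctFactors_apply, ← List.card_toFinset, Nat.toFinset_factors]
  push_cast
  rfl

end ArithmeticFunction

namespace Nat

theorem exists_odd_sq_dvd_two_pow_mul_iff {k m : ℕ} (hm : Odd m) :
    (∃ d, 1 < d ∧ Odd d ∧ d ^ 2 ∣ 2 ^ k * m) ↔ ¬Squarefree m := by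
  constructor
  · rintro ⟨d, hd, hdo, hdvd⟩ hsf
    have hdm : d ^ 2 ∣ m :=
      (Nat.Coprime.pow _ _ (Nat.coprime_two_right.mpr hdo)).dvd_of_dvd_mul_left hdvd
    exact hd.ne' (Nat.isUnit_iff.mp (hsf d (sq d ▸ hdm)))
  · intro hsf
    obtain ⟨p, hp, hpp⟩ : ∃ p, p.Prime ∧ p * p ∣ m := by
      simpa [Nat.squarefree_iff_prime_squarefree] using hsf
    exact ⟨p, hp.one_lt, hm.of_dvd_nat (dvd_of_mul_right_dvd hpp),
      (sq p ▸ hpp).trans (dvd_mul_left m _)⟩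

theorem primeFactors_two_pow_mul {k m : ℕ} (hk : k ≠ 0) (hm : m ≠ 0) :
    (2 ^ k * m).primeFactors = (2 * m).primeFactors := by
  rw [Nat.primeFactors_mul (by positivity) hm, Nat.primeFactors_mul two_ne_zero hm,
    Nat.primeFactors_pow 2 hk]

end Nat

open ArithmeticFunction

-- These are `-hfun` and `-gfun` (away from `0`); unlike those, they are multiplicative.
noncomputable def altHarmonic : ArithmeticFunction ℚ :=
  (ifDvd 2 (-1)).pdiv ↑ArithmeticFunction.id

noncomputable def altHarmonicInv : ArithmeticFunction ℚ :=
  (ifDvd 2 (1 / 2)).pmul ((((μ : ArithmeticFunction ℤ) : ArithmeticFunction ℚ).pdiv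
    ↑ArithmeticFunction.id).compOrdCompl 2)

theorem isMultiplicative_altHarmonic : altHarmonic.IsMultiplicative :=
  (isMultiplicative_ifDvd Nat.prime_two _).pdiv isMultiplicative_id.natCast

theorem isMultiplicative_altHarmonicInv : altHarmonicInv.IsMultiplicative :=
  (isMultiplicative_ifDvd Nat.prime_two _).pmul
    ((isMultiplicative_moebius.intCast.pdiv isMultiplicative_id.natCast).compOrdCompl 2)

theorem altHarmonic_apply_of_odd {n : ℕ} (hn : Odd n) : altHarmonic n = 1 / n := by
  rw [altHarmonic, pdiv_apply, ifDvd_apply _ hn.pos.ne',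
    if_neg hn.not_two_dvd_nat, natCoe_apply, id_apply]

theorem altHarmonic_apply_of_even {n : ℕ} (hn : Even n) (hn0 : n ≠ 0) :
    altHarmonic n = -1 / n := by
  rw [altHarmonic, pdiv_apply, ifDvd_apply _ hn0, if_pos hn.two_dvd, natCoe_apply, id_apply]

theorem altHarmonic_two_pow {k : ℕ} (hk : k ≠ 0) : altHarmonic (2 ^ k) = -1 / 2 ^ k := by
  rw [altHarmonic_apply_of_even (Nat.even_pow.mpr ⟨even_two, hk⟩) (by positivity)]
  push_cast
  rfl

theorem hfun_eq_neg_altHarmonic (n : ℕ) : hfun n = -altHarmonic n := by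
  rcases n.even_or_odd with hn | hn
  · rcases eq_or_ne n 0 with rfl | hn0
    · simp [hfun]
    rw [hfun, altHarmonic_apply_of_even hn hn0, hn.neg_one_pow]
    ring
  · rw [hfun, altHarmonic_apply_of_odd hn, hn.neg_one_pow]
    ring

theorem altHarmonicInv_apply_of_odd {m : ℕ} (hm : Odd m) : altHarmonicInv m = μ m / m := by
  rw [altHarmonicInv, pmul_apply, ifDvd_apply _ hm.pos.ne',
    if_neg hm.not_two_dvd_nat, compOrdCompl_apply,
    Nat.ordCompl_eq_self_iff_zero_or_not_dvd m Nat.prime_two |>.mpr (Or.inr hm.not_two_dvd_nat),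
    pdiv_apply, intCoe_apply, natCoe_apply, id_apply, one_mul]

theorem altHarmonicInv_two_pow_mul {k m : ℕ} (hk : k ≠ 0) (hm : Odd m) :
    altHarmonicInv (2 ^ k * m) = μ m / (2 * m) := by
  have hm0 : m ≠ 0 := hm.pos.ne'
  rw [altHarmonicInv, pmul_apply, ifDvd_apply _ (by positivity),
    if_pos (dvd_mul_of_dvd_left (dvd_pow_self 2 hk) m), compOrdCompl_apply,
    Nat.ordCompl_pow_mul_of_not_dvd k Nat.prime_two hm.not_two_dvd_nat,
    pdiv_apply, intCoe_apply, natCoe_apply, id_apply]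
  field_simp

theorem altHarmonicInv_two_pow {k : ℕ} (hk : k ≠ 0) : altHarmonicInv (2 ^ k) = 1 / 2 := by
  simpa using altHarmonicInv_two_pow_mul hk odd_one

theorem gfun_eq_neg_altHarmonicInv {n : ℕ} (hn : n ≠ 0) : gfun n = -altHarmonicInv n := by
  obtain ⟨k, m, hm, rfl⟩ := Nat.exists_eq_two_pow_mul_odd hn
  rcases eq_or_ne k 0 with rfl | hk
  · rw [pow_zero, one_mul, gfun, if_pos hm, altHarmonicInv_apply_of_odd hm, hm.neg_one_pow]
    ring
  have hm0 : m ≠ 0 := hm.pos.ne'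
  have heven : ¬Odd (2 ^ k * m) :=
    Nat.not_odd_iff_even.mpr ((Nat.even_pow.mpr ⟨even_two, hk⟩).mul_right m)
  rw [gfun, if_neg heven, ffun, altHarmonicInv_two_pow_mul hk hm]
  by_cases hsf : Squarefree m
  · have hsf2 : Squarefree (2 * m) :=
      (Nat.squarefree_mul (Nat.coprime_two_left.mpr hm)).mpr ⟨Nat.prime_two.squarefree, hsf⟩
    rw [if_neg ((Nat.exists_odd_sq_dvd_two_pow_mul_iff hm).not.mpr (not_not.mpr hsf)),
      Nat.primeFactors_two_pow_mul hk hm0, ← moebius_div_eq_of_squarefree hsf2,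
      moebius_two_mul hm]
    push_cast
    ring
  · rw [if_pos ((Nat.exists_odd_sq_dvd_two_pow_mul_iff hm).mpr hsf),
      moebius_eq_zero_of_not_squarefree hsf]
    simp

theorem altHarmonic_mul_altHarmonicInv_apply_of_odd {n : ℕ} (hn : Odd n) :
    (altHarmonic * altHarmonicInv) n = (1 : ArithmeticFunction ℚ) n := by
  have hterm : ∀ d ∈ n.divisors, altHarmonic d * altHarmonicInv (n / d) = μ (n / d) / n := by
    intro d hd
    obtain ⟨e, rfl⟩ := Nat.dvd_of_mem_divisors hd
    obtain ⟨hd, he⟩ := Nat.odd_mul.mp hn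
    rw [Nat.mul_div_cancel_left e hd.pos, altHarmonic_apply_of_odd hd,
      altHarmonicInv_apply_of_odd he]
    have := hd.pos
    have := he.pos
    push_cast
    field_simp
  rw [mul_apply_eq_sum_divisors, sum_congr rfl hterm, ← sum_div,
    Nat.sum_div_divisors n (fun d => (μ d : ℚ)), sum_divisors_moebius, one_apply]
  split_ifs with h
  · simp [h]
  · simp

theorem sum_range_altHarmonic_two_pow (k : ℕ) :
    ∑ i ∈ range (k + 1), altHarmonic (2 ^ i) = 1 / 2 ^ k := by
  induction k with
  | zero => simp [altHarmonic_apply_of_odd odd_one]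
  | succ k ih =>
    rw [sum_range_succ, ih, altHarmonic_two_pow k.add_one_ne_zero]
    ring

theorem altHarmonic_mul_altHarmonicInv_apply_two_pow (k : ℕ) :
    (altHarmonic * altHarmonicInv) (2 ^ k) = (1 : ArithmeticFunction ℚ) (2 ^ k) := by
  rcases k with _ | j
  · simpa using altHarmonic_mul_altHarmonicInv_apply_of_odd odd_one
  have hG : ∀ i ∈ range (j + 1),
      altHarmonic (2 ^ i) * altHarmonicInv (2 ^ (j + 1 - i)) = altHarmonic (2 ^ i) * (1 / 2) := by
    intro i hi
    rw [altHarmonicInv_two_pow (by simp at hi; omega)]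
  rw [mul_apply_prime_pow Nat.prime_two, sum_range_succ, sum_congr rfl hG, ← sum_mul,
    sum_range_altHarmonic_two_pow, Nat.sub_self, pow_zero, isMultiplicative_altHarmonicInv.map_one,
    altHarmonic_two_pow j.add_one_ne_zero, one_apply_ne (Nat.one_lt_two_pow j.add_one_ne_zero).ne']
  ring

theorem altHarmonic_mul_altHarmonicInv : altHarmonic * altHarmonicInv = 1 := by
  rw [IsMultiplicative.eq_iff_eq_on_prime_powers _
    (isMultiplicative_altHarmonic.mul isMultiplicative_altHarmonicInv) _ isMultiplicative_one]
  intro p k hp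
  rcases hp.eq_two_or_odd' with rfl | hp
  · exact altHarmonic_mul_altHarmonicInv_apply_two_pow k
  · exact altHarmonic_mul_altHarmonicInv_apply_of_odd hp.pow

theorem convolution_inverse_of_alternating_harmonic_general (n : ℕ) :
    (∑ d ∈ n.divisors, hfun d * gfun (n / d)) = if n = 1 then 1 else 0 := by
  have hterm : ∀ d ∈ n.divisors,
      hfun d * gfun (n / d) = altHarmonic d * altHarmonicInv (n / d) := by
    intro d hd
    obtain ⟨hdn, hn⟩ := Nat.mem_divisors.mp hd
    have hnd : n / d ≠ 0 :=
      (Nat.div_ne_zero_iff_of_dvd hdn).mpr ⟨hn, ne_zero_of_dvd_ne_zero hn hdn⟩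
    rw [hfun_eq_neg_altHarmonic, gfun_eq_neg_altHarmonicInv hnd, neg_mul_neg]
  rw [sum_congr rfl hterm, ← mul_apply_eq_sum_divisors, altHarmonic_mul_altHarmonicInv, one_apply]

/-- `g` is the Dirichlet-convolution inverse of `h(n) = (−1)ⁿ/n`:
for every `n ≥ 1`, `∑_{d ∣ n} h(d) g(n/d)` is `1` for `n = 1` and `0` otherwise. -/
theorem convolution_inverse_of_alternating_harmonic (n : ℕ) (hn : 1 ≤ n) :
    (∑ d ∈ n.divisors, hfun d * gfun (n / d)) = if n = 1 then 1 else 0 :=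
  convolution_inverse_of_alternating_harmonic_general n
end
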